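/- Let (R, m) be a Noetherian local domain that is not m-adically complete, and let R̂ denote its m-adic completion. Then Hom_R(R̂, R) = 0. -/

import Mathlib

open CategoryTheory Limits

noncomputable section

open scoped Classical in
/-- Depth of a module over a local ring: the supremum of lengths of regular sequences
contained in the maximal ideal; `⊤` for the zero module. -/
def eDepth (R : Type) [CommRing R] [IsLocalRing R]
    (M : Type) [AddCommGroup M] [Module R M] : ℕ∞ :=
  if Subsingleton M then ⊤
  else sSup {n : ℕ∞ | ∃ rs : List R, (rs.length : ℕ∞) = n ∧
    (∀ r ∈ rs, r ∈ IsLocalRing.maximalIdeal R) ∧ RingTheory.Sequence.IsRegular M rs}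

/-- `M` has projective dimension at most `n`. -/
def projDimLE (R : Type) [CommRing R] (M : Type) [AddCommGroup M] [Module R M] (n : ℕ) : Prop :=
  ∃ P : ProjectiveResolution (ModuleCat.of R M), ∀ i > n, IsZero (P.complex.X i)

/-- The projective dimension of `M`, as an element of `ℕ∞`. -/
def projDim (R : Type) [CommRing R] (M : Type) [AddCommGroup M] [Module R M] : ℕ∞ :=
  sInf {n : ℕ∞ | ∃ m : ℕ, (m : ℕ∞) = n ∧ projDimLE R M m}

/-- `Tor_n^R(M, N)` as an object of `ModuleCat R`. -/
def TorMod (R : Type) [CommRing R] (n : ℕ) (M N : Type) [AddCommGroup M] [Module R M]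
    [AddCommGroup N] [Module R N] : ModuleCat R :=
  ((Tor (ModuleCat R) n).obj (ModuleCat.of R M)).obj (ModuleCat.of R N)

/-- `Ext^n_R(M, N)` as an object of `ModuleCat R`. -/
def ExtMod (R : Type) [CommRing R] (n : ℕ) (M N : Type) [AddCommGroup M] [Module R M]
    [AddCommGroup N] [Module R N] : ModuleCat R :=
  ((Ext R (ModuleCat R) n).obj (Opposite.op (ModuleCat.of R M))).obj (ModuleCat.of R N)

/-- `M` has flat dimension at most `n`: all `Tor_i(M, -)` vanish for `i > n`. -/
def flatDimLE (R : Type) [CommRing R] (M : Type) [AddCommGroup M] [Module R M] (n : ℕ) : Prop :=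
  ∀ (N : Type) (_ : AddCommGroup N) (_ : Module R N), ∀ i > n, IsZero (TorMod R i M N)

/-- The flat dimension of `M`, as an element of `ℕ∞`. -/
def flatDim (R : Type) [CommRing R] (M : Type) [AddCommGroup M] [Module R M] : ℕ∞ :=
  sInf {n : ℕ∞ | ∃ m : ℕ, (m : ℕ∞) = n ∧ flatDimLE R M m}

/-!
A linear form `f : R̂ → R` is `m`-adically continuous and `R` is dense in `R̂`, so the image of
`f x` in `R̂` is `f 1 • x`. If `f 1 = 0`, then `f = 0` because `R` is separated. Otherwise
`f 1` is a nonzerodivisor of `R`, hence regular on the flat `R`-module `R̂`, so `f` embeds `R̂`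
into `R` and `R̂` is a finite `R`-module. Since `R̂ = R + m R̂`, Nakayama's lemma then makes
`R → R̂` surjective.
-/

namespace AdicCompletion

variable {R : Type*} [CommRing R] {I : Ideal R}

section Module

variable {M : Type*} [AddCommGroup M] [Module R M]

theorem exists_sub_of_mem_pow_smul_top (hI : I.FG) (x : AdicCompletion I M) (n : ℕ) :
    ∃ m : M, x - of I M m ∈ (I ^ n • ⊤ : Submodule R (AdicCompletion I M)) := by
  obtain ⟨m, hm⟩ := Submodule.mkQ_surjective _ (eval I M n x)
  refine ⟨m, ?_⟩
  rw [pow_smul_top_eq_ker_eval hI, LinearMap.mem_ker, map_sub, eval_of, hm, sub_self]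

theorem range_of_sup_smul_top (hI : I.FG) :
    LinearMap.range (of I M) ⊔ I • ⊤ = ⊤ := by
  refine eq_top_iff.mpr fun x _ ↦ ?_
  obtain ⟨m, hm⟩ := exists_sub_of_mem_pow_smul_top hI x 1
  rw [pow_one] at hm
  simpa using Submodule.add_mem_sup (LinearMap.mem_range_self (of I M) m) hm

theorem of_surjective_of_finite (hI : I.FG) (hIjac : I ≤ Ideal.jacobson ⊥)
    [Module.Finite R (AdicCompletion I M)] : Function.Surjective (of I M) := by
  refine LinearMap.range_eq_top.mp (eq_top_iff.mpr ?_)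
  exact Submodule.le_of_le_smul_of_le_jacobson_bot Module.Finite.fg_top hIjac
    (range_of_sup_smul_top hI).ge

end Module

theorem of_linearMap_apply_eq_map_one_smul (hI : I.FG) (f : AdicCompletion I R →ₗ[R] R)
    (x : AdicCompletion I R) :
    of I R (f x) = f 1 • x := by
  refine (IsHausdorff.eq_iff_smodEq (I := I)).mpr fun n ↦ SModEq.sub_mem.mpr ?_
  obtain ⟨r, hr⟩ := exists_sub_of_mem_pow_smul_top hI x n
  have hfr : f (of I R r) = f 1 • r := by
    rw [show of I R r = algebraMap R _ r from rfl, Algebra.algebraMap_eq_smul_one, map_smul,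
      smul_eq_mul, smul_eq_mul, mul_comm]
  have hfx : f x - f 1 • r ∈ (I ^ n • ⊤ : Submodule R R) := by
    rw [← hfr, ← map_sub]
    exact Submodule.smul_top_le_comap_smul_top (I ^ n) f hr
  have hsplit : of I R (f x) - f 1 • x = of I R (f x - f 1 • r) - f 1 • (x - of I R r) := by
    rw [map_sub, map_smul, smul_sub]
    abel
  rw [hsplit]
  exact Submodule.sub_mem _ (Submodule.smul_top_le_comap_smul_top (I ^ n) (of I R) hfx)
    (Submodule.smul_mem _ _ hr)

theorem linearMap_eq_zero_of_map_one_eq_zero [IsHausdorff I R] (hI : I.FG)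
    (f : AdicCompletion I R →ₗ[R] R) (hf : f 1 = 0) : f = 0 :=
  LinearMap.ext fun x ↦ of_injective I R <| by
    rw [of_linearMap_apply_eq_map_one_smul hI, hf, zero_smul, LinearMap.zero_apply,
      (of I R).map_zero]

theorem linearMap_injective_of_map_one_ne_zero [IsDomain R] [IsNoetherianRing R]
    (f : AdicCompletion I R →ₗ[R] R) (hf : f 1 ≠ 0) : Function.Injective f := by
  have hreg : IsSMulRegular (AdicCompletion I R) (f 1) :=
    Module.Flat.isSMulRegular_of_isRegular (IsRegular.of_ne_zero hf)
  intro x y hxy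
  apply hreg
  change f 1 • x = f 1 • y
  rw [← of_linearMap_apply_eq_map_one_smul I.fg_of_isNoetherianRing f x,
    ← of_linearMap_apply_eq_map_one_smul I.fg_of_isNoetherianRing f y, hxy]

end AdicCompletion

open IsLocalRing AdicCompletion in
/-- If a Noetherian local domain `R` is not complete, then `Hom_R(R̂, R) = 0`. -/
theorem hom_completion_eq_zero (R : Type) [CommRing R] [IsDomain R] [IsLocalRing R]
    [IsNoetherianRing R]
    (hnc : ¬ Function.Surjective (AdicCompletion.of (IsLocalRing.maximalIdeal R) R)) :
    ∀ f : AdicCompletion (IsLocalRing.maximalIdeal R) R →ₗ[R] R, f = 0 := by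
  intro f
  have hfg : (maximalIdeal R).FG := (maximalIdeal R).fg_of_isNoetherianRing
  by_cases hf : f 1 = 0
  · exact linearMap_eq_zero_of_map_one_eq_zero hfg f hf
  · have : Module.Finite R (AdicCompletion (maximalIdeal R) R) :=
      Module.Finite.of_injective f (linearMap_injective_of_map_one_ne_zero f hf)
    exact absurd (of_surjective_of_finite hfg (maximalIdeal_le_jacobson ⊥)) hnc
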